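/- In the four quaternion algebra A, define reversal by rev(q₀ + q₁ε₁ + q₂ε₂ + q₃ε₃) = q̄₀ + q̄₁ε₁ + q̄₂ε₂ − q̄₃ε₃ (quaternion conjugation on coefficients). Then reversal is an ℝ-linear antiautomorphism of A: rev(pq) = rev(q)·rev(p) and rev(rev(q)) = q for all p, q ∈ A. -/

import Mathlib

open CliffordAlgebra

/-- The quadratic form of signature (4,1) on ℝ⁵. -/
noncomputable def Q41 : QuadraticForm ℝ (Fin 5 → ℝ) :=
  QuadraticMap.weightedSumSquares ℝ ![1, 1, 1, 1, -1]

/-- Conformal geometric algebra Cl(4,1). -/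
noncomputable abbrev CGA := CliffordAlgebra Q41

/-- The orthonormal basis vectors `e₁, e₂, e₃, e₊, e₋` (indices 0–4). -/
noncomputable def e (i : Fin 5) : CGA := ι Q41 (Pi.single i 1)

/-- `e_o = (e₋ - e₊)/2`. -/
noncomputable def eo : CGA := (2⁻¹ : ℝ) • (e 4 - e 3)

/-- `e_∞ = e₋ + e₊`. -/
noncomputable def einf : CGA := e 4 + e 3

/-- `ε₁ = e₁e₂e₃e_∞`. -/
noncomputable def eps1 : CGA := e 0 * e 1 * e 2 * einf

/-- `ε₂ = e₁e₂e₃e_o`. -/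
noncomputable def eps2 : CGA := e 0 * e 1 * e 2 * eo

/-- `ε₃ = ε₁ε₂ + 1`. -/
noncomputable def eps3 : CGA := eps1 * eps2 + 1

/-- The image of the quaternion unit `i`: `i ↦ −e₂e₃`. -/
noncomputable def qI : CGA := -(e 1 * e 2)

/-- The image of the quaternion unit `j`: `j ↦ e₁e₃`. -/
noncomputable def qJ : CGA := e 0 * e 2

/-- The image of the quaternion unit `k`: `k ↦ −e₁e₂`. -/
noncomputable def qK : CGA := -(e 0 * e 1)

/-- Embedding of the quaternions into Cl(4,1) via `i ↦ −e₂e₃`, `j ↦ e₁e₃`, `k ↦ −e₁e₂`. -/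
noncomputable def qe (q : Quaternion ℝ) : CGA :=
  algebraMap ℝ CGA q.re + q.imI • qI + q.imJ • qJ + q.imK • qK

/-- The four quaternion representation `q₀ + q₁ε₁ + q₂ε₂ + q₃ε₃`. -/
noncomputable def fourQuat (q0 q1 q2 q3 : Quaternion ℝ) : CGA :=
  qe q0 + qe q1 * eps1 + qe q2 * eps2 + qe q3 * eps3

namespace FQaux

lemma Q41_single (i : Fin 5) : Q41 (Pi.single i 1) = ![1,1,1,1,-1] i := by
  fin_cases i <;>
    simp [Q41, QuadraticMap.weightedSumSquares_apply, Fin.sum_univ_five, Pi.single_apply]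

lemma e_sq (i : Fin 5) : e i * e i = algebraMap ℝ CGA (![1,1,1,1,-1] i) := by
  rw [e, ι_sq_scalar, Q41_single]

lemma polar0 {i j : Fin 5} (h : i ≠ j) :
    QuadraticMap.polar Q41 (Pi.single i 1) (Pi.single j 1) = 0 := by
  fin_cases i <;> fin_cases j <;> simp_all <;>
    simp [QuadraticMap.polar, Q41, QuadraticMap.weightedSumSquares_apply,
      Fin.sum_univ_five, Pi.single_apply]

lemma e_swap {i j : Fin 5} (h : i ≠ j) : e i * e j = -(e j * e i) := by
  have := ι_mul_ι_add_swap (Q := Q41) (Pi.single i 1) (Pi.single j 1)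
  rw [polar0 h, map_zero] at this
  exact eq_neg_of_add_eq_zero_left this

lemma e_swap' {i j : Fin 5} (h : i ≠ j) (x : CGA) : e i * (e j * x) = -(e j * (e i * x)) := by
  rw [← mul_assoc, e_swap h, neg_mul, mul_assoc]

lemma e_sq1 {i : Fin 5} (h : i ≠ 4) : e i * e i = 1 := by
  rw [e_sq]; fin_cases i <;> simp_all
lemma e_sq1' {i : Fin 5} (h : i ≠ 4) (x : CGA) : e i * (e i * x) = x := by
  rw [← mul_assoc, e_sq1 h, one_mul]
@[simp] lemma e_sq4 : e 4 * e 4 = -1 := by rw [e_sq]; simp [Matrix.cons_val]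
@[simp] lemma e_sq4' (x : CGA) : e 4 * (e 4 * x) = -x := by rw [← mul_assoc, e_sq4, neg_one_mul]

@[simp] lemma s10 : e 1 * e 0 = -(e 0 * e 1) := e_swap (by decide)
@[simp] lemma s20 : e 2 * e 0 = -(e 0 * e 2) := e_swap (by decide)
@[simp] lemma s21 : e 2 * e 1 = -(e 1 * e 2) := e_swap (by decide)
@[simp] lemma s30 : e 3 * e 0 = -(e 0 * e 3) := e_swap (by decide)
@[simp] lemma s31 : e 3 * e 1 = -(e 1 * e 3) := e_swap (by decide)
@[simp] lemma s32 : e 3 * e 2 = -(e 2 * e 3) := e_swap (by decide)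
@[simp] lemma s40 : e 4 * e 0 = -(e 0 * e 4) := e_swap (by decide)
@[simp] lemma s41 : e 4 * e 1 = -(e 1 * e 4) := e_swap (by decide)
@[simp] lemma s42 : e 4 * e 2 = -(e 2 * e 4) := e_swap (by decide)
@[simp] lemma s43 : e 4 * e 3 = -(e 3 * e 4) := e_swap (by decide)
@[simp] lemma s10' (x : CGA) : e 1 * (e 0 * x) = -(e 0 * (e 1 * x)) := e_swap' (by decide) x
@[simp] lemma s20' (x : CGA) : e 2 * (e 0 * x) = -(e 0 * (e 2 * x)) := e_swap' (by decide) x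
@[simp] lemma s21' (x : CGA) : e 2 * (e 1 * x) = -(e 1 * (e 2 * x)) := e_swap' (by decide) x
@[simp] lemma s30' (x : CGA) : e 3 * (e 0 * x) = -(e 0 * (e 3 * x)) := e_swap' (by decide) x
@[simp] lemma s31' (x : CGA) : e 3 * (e 1 * x) = -(e 1 * (e 3 * x)) := e_swap' (by decide) x
@[simp] lemma s32' (x : CGA) : e 3 * (e 2 * x) = -(e 2 * (e 3 * x)) := e_swap' (by decide) x
@[simp] lemma s40' (x : CGA) : e 4 * (e 0 * x) = -(e 0 * (e 4 * x)) := e_swap' (by decide) x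
@[simp] lemma s41' (x : CGA) : e 4 * (e 1 * x) = -(e 1 * (e 4 * x)) := e_swap' (by decide) x
@[simp] lemma s42' (x : CGA) : e 4 * (e 2 * x) = -(e 2 * (e 4 * x)) := e_swap' (by decide) x
@[simp] lemma s43' (x : CGA) : e 4 * (e 3 * x) = -(e 3 * (e 4 * x)) := e_swap' (by decide) x
@[simp] lemma q00 : e 0 * e 0 = 1 := e_sq1 (by decide)
@[simp] lemma q11 : e 1 * e 1 = 1 := e_sq1 (by decide)
@[simp] lemma q22 : e 2 * e 2 = 1 := e_sq1 (by decide)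
@[simp] lemma q33 : e 3 * e 3 = 1 := e_sq1 (by decide)
@[simp] lemma q00' (x : CGA) : e 0 * (e 0 * x) = x := e_sq1' (by decide) x
@[simp] lemma q11' (x : CGA) : e 1 * (e 1 * x) = x := e_sq1' (by decide) x
@[simp] lemma q22' (x : CGA) : e 2 * (e 2 * x) = x := e_sq1' (by decide) x
@[simp] lemma q33' (x : CGA) : e 3 * (e 3 * x) = x := e_sq1' (by decide) x

local notation "R" => reverse (Q := Q41)

@[simp] lemma rev_e (i : Fin 5) : R (e i) = e i := reverse_ι _

lemma anticomm : eps1 * eps2 + eps2 * eps1 = -2 := by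
  have h : eps1 * eps2 + eps2 * eps1 = (-2:ℝ) • (1:CGA) := by
    simp only [eps1, eps2, einf, eo]
    simp [mul_assoc, mul_add, add_mul, mul_sub, sub_mul, smul_sub, smul_add, mul_smul_comm,
      smul_mul_assoc, mul_neg, neg_mul]
    module
  rw [h]; norm_num [Algebra.smul_def, map_ofNat]

lemma rev_eps1 : R eps1 = eps1 := by
  simp only [eps1, einf, reverse.map_mul, map_add, rev_e]
  simp [mul_assoc, mul_add, add_mul, mul_neg, neg_mul]
  abel

lemma rev_eps2 : R eps2 = eps2 := by
  simp only [eps2, eo, reverse.map_mul, map_smul, map_sub, rev_e]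
  simp [mul_assoc, mul_sub, sub_mul, smul_sub, mul_smul_comm, smul_mul_assoc,
    mul_neg, neg_mul]
  abel

lemma rev_eps3 : R eps3 = -eps3 := by
  simp only [eps3, map_add, reverse.map_mul, rev_eps1, rev_eps2, reverse.map_one]
  have h1 : eps2 * eps1 = -2 - eps1 * eps2 := eq_sub_of_add_eq' anticomm
  have h2 : (2:CGA) = (2:ℝ) • 1 := by norm_num [Algebra.smul_def, map_ofNat]
  rw [h1, h2]
  module

lemma comm_eps1 (q : Quaternion ℝ) : qe q * eps1 = eps1 * qe q := by
  simp only [qe, qI, qJ, qK, eps1, einf]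
  simp [Algebra.algebraMap_eq_smul_one, mul_assoc, mul_add, add_mul, mul_neg, neg_mul,
    mul_smul_comm, smul_mul_assoc, smul_add, smul_neg, smul_smul]
  module

lemma comm_eps2 (q : Quaternion ℝ) : qe q * eps2 = eps2 * qe q := by
  simp only [qe, qI, qJ, qK, eps2, eo]
  simp [Algebra.algebraMap_eq_smul_one, mul_assoc, mul_add, add_mul, mul_sub, sub_mul,
    mul_neg, neg_mul, mul_smul_comm, smul_mul_assoc, smul_add, smul_sub, smul_neg, smul_smul]
  module

lemma comm_eps3 (q : Quaternion ℝ) : qe q * eps3 = eps3 * qe q := by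
  rw [eps3, mul_add, add_mul, mul_one, one_mul, ← mul_assoc, comm_eps1, mul_assoc,
    comm_eps2, ← mul_assoc]

lemma rev_qe (q : Quaternion ℝ) : R (qe q) = qe (star q) := by
  simp only [qe, map_add, map_smul, reverse.commutes, map_neg, reverse.map_mul, rev_e,
    qI, qJ, qK, Quaternion.re_star, Quaternion.imI_star, Quaternion.imJ_star,
    Quaternion.imK_star]
  simp [neg_smul, smul_neg]

end FQaux

open FQaux

/-- Reversal acts on the four quaternion representation by
`rev(q₀ + q₁ε₁ + q₂ε₂ + q₃ε₃) = q̄₀ + q̄₁ε₁ + q̄₂ε₂ − q̄₃ε₃`, and it is an ℝ-linear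
antiautomorphism: `rev(pq) = rev(q)·rev(p)` and `rev(rev(q)) = q`. -/
theorem four_quaternion_reversal :
    (∀ q0 q1 q2 q3 : Quaternion ℝ,
      reverse (Q := Q41) (fourQuat q0 q1 q2 q3) =
        qe (star q0) + qe (star q1) * eps1 + qe (star q2) * eps2 - qe (star q3) * eps3) ∧
    (∀ p q : CGA, reverse (Q := Q41) (p * q) =
      reverse (Q := Q41) q * reverse (Q := Q41) p) ∧
    (∀ q : CGA, reverse (Q := Q41) (reverse (Q := Q41) q) = q) := by
  refine ⟨fun q0 q1 q2 q3 => ?_, fun p q => reverse.map_mul p q, reverse_reverse⟩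
  simp only [fourQuat, map_add, reverse.map_mul, rev_qe, rev_eps1, rev_eps2, rev_eps3,
    neg_mul, mul_neg]
  rw [← comm_eps1, ← comm_eps2, ← comm_eps3]
  try abel
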